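/- Let (u, v, pu, pv) solve the FLRW null geodesic system with L = 0 on an interval [1,S), maximal subject to the constraints r > 0 and v+u > 0, with t(1) = 1, pv(1) = 0, p := pu(1) > 0 and R₀ := r(1) > 0. Then pv ≡ 0 on [1,S), t(s) = (1 + (3/2)·p·(s−1))^{2/3} and r(s) = R₀ − ∫₁ˢ p·(1 + (3/2)·p·(s'−1))^{−2/3} ds' for all s ∈ [1,S); moreover S < ∞ and r(s) → 0 as s → S (the radial ingoing null geodesic reaches the centre of symmetry in finite parameter time). -/

import Mathlib

/-- The time coordinate `t = (v+u)²/4` along a curve in double null coordinates. -/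
noncomputable def tOf (u v : ℝ → ℝ) (s : ℝ) : ℝ := (v s + u s) ^ 2 / 4

/-- The radial coordinate `r = v − u` along a curve in double null coordinates. -/
noncomputable def rOf (u v : ℝ → ℝ) (s : ℝ) : ℝ := v s - u s

/-- **The FLRW null geodesic system** with angular momentum `L` on a set `I ⊆ ℝ`:
`u' = pu`, `v' = pv`,
`pu' = −t^{−1/2}·pu² − (1/2)(1/(2t^{1/2}) + 1/r)·L²/(t²r²)`,
`pv' = −t^{−1/2}·pv² − (1/2)(1/(2t^{1/2}) − 1/r)·L²/(t²r²)`,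
where `t = (v+u)²/4` and `r = v−u` are required to satisfy `v+u > 0`, `r > 0` on `I`,
and `pu ≥ 0`, `pv ≥ 0` on `I`. -/
def FLRWGeodesicSystem (I : Set ℝ) (L : ℝ) (u v pu pv : ℝ → ℝ) : Prop :=
  (∀ s ∈ I, 0 < v s + u s) ∧
  (∀ s ∈ I, 0 < rOf u v s) ∧
  (∀ s ∈ I, 0 ≤ pu s) ∧
  (∀ s ∈ I, 0 ≤ pv s) ∧
  (∀ s ∈ I, HasDerivAt u (pu s) s) ∧
  (∀ s ∈ I, HasDerivAt v (pv s) s) ∧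
  (∀ s ∈ I, HasDerivAt pu
    (-(pu s) ^ 2 / Real.sqrt (tOf u v s)
      - 1 / 2 * (1 / (2 * Real.sqrt (tOf u v s)) + 1 / rOf u v s) * L ^ 2
          / ((tOf u v s) ^ 2 * (rOf u v s) ^ 2)) s) ∧
  (∀ s ∈ I, HasDerivAt pv
    (-(pv s) ^ 2 / Real.sqrt (tOf u v s)
      - 1 / 2 * (1 / (2 * Real.sqrt (tOf u v s)) - 1 / rOf u v s) * L ^ 2
          / ((tOf u v s) ^ 2 * (rOf u v s) ^ 2)) s)

open Topology Filter

/-- The half-open interval `[a, S)` of real numbers, with possibly infinite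
right endpoint `S : EReal`. -/
def IcoE (a : ℝ) (S : EReal) : Set ℝ := {s : ℝ | a ≤ s ∧ (s : EReal) < S}

/-!
With `L = 0` the `pv` equation reads `pv' = -pv²/√t ≤ 0`, so `pv ≥ 0` and `pv(1) = 0` force
`pv ≡ 0`, and `v` is constant. Then `t·pu` is conserved (equal to `p`), and since
`w = (v+u)/2 = √t` satisfies `(w³)' = (3/2)·t·pu = (3/2)p`, we get
`t^{3/2} = 1 + (3/2)p(s-1)`. So the solution is an explicit one, whose radius
`r = R₀ + 2 - 2√t` vanishes at a finite parameter `centreTime p R₀`: positivity of `r` gives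
`S ≤ centreTime p R₀`, and maximality gives equality because the explicit solution exists on all
of `[1, centreTime p R₀)`.
-/

lemma ordConnected_IcoE (a : ℝ) (S : EReal) : (IcoE a S).OrdConnected :=
  ⟨fun _ hx _ hy _ hz => ⟨hx.1.trans hz.1, (EReal.coe_le_coe_iff.2 hz.2).trans_lt hy.2⟩⟩

lemma Convex.eq_of_hasDerivAt_zero {s : Set ℝ} (hs : Convex ℝ s) {f : ℝ → ℝ}
    (hf : ∀ x ∈ s, HasDerivAt f 0 x) {x y : ℝ} (hx : x ∈ s) (hy : y ∈ s) : f x = f y := by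
  have := hs.norm_image_sub_le_of_norm_hasDerivWithin_le (C := 0)
    (fun z hz => (hf z hz).hasDerivWithinAt) (fun _ _ => by simp) hx hy
  rw [zero_mul, norm_le_zero_iff, sub_eq_zero] at this
  exact this.symm

lemma Real.pow_three_rpow_one_div_three {x : ℝ} (hx : 0 ≤ x) :
    (x ^ 3) ^ ((1 : ℝ) / 3) = x := by
  simpa using Real.pow_rpow_inv_natCast hx (n := 3) (by norm_num)

/-- `t^{3/2}` along an ingoing radial geodesic with `t(1) = 1` and `t·pu ≡ p`. -/
noncomputable def ingoingClock (p s : ℝ) : ℝ := 1 + 3 / 2 * p * (s - 1)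

lemma hasDerivAt_ingoingClock (p s : ℝ) : HasDerivAt (ingoingClock p) (3 / 2 * p) s := by
  have : HasDerivAt (ingoingClock p) (3 / 2 * p * 1) s :=
    (((hasDerivAt_id s).sub_const 1).const_mul (3 / 2 * p)).const_add 1
  rwa [mul_one] at this

noncomputable def centreTime (p R₀ : ℝ) : ℝ := 1 + (((R₀ + 2) / 2) ^ 3 - 1) / (3 / 2 * p)

noncomputable def radialU (p R₀ s : ℝ) : ℝ :=
  2 * ingoingClock p s ^ ((1 : ℝ) / 3) - 1 - R₀ / 2

noncomputable def radialV (R₀ : ℝ) : ℝ → ℝ := fun _ => 1 + R₀ / 2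

noncomputable def radialPu (p s : ℝ) : ℝ := p * ingoingClock p s ^ (-(2 : ℝ) / 3)

section ExplicitSolution

variable {p R₀ s : ℝ}

lemma one_le_ingoingClock (hp : 0 ≤ p) (hs : 1 ≤ s) : 1 ≤ ingoingClock p s := by
  unfold ingoingClock; nlinarith

lemma ingoingClock_centreTime (hp : p ≠ 0) :
    ingoingClock p (centreTime p R₀) = ((R₀ + 2) / 2) ^ 3 := by
  unfold ingoingClock centreTime; field_simp; ring

lemma one_lt_centreTime (hp : 0 < p) (hR₀ : 0 < R₀) : 1 < centreTime p R₀ := by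
  have : 1 < ((R₀ + 2) / 2) ^ 3 := one_lt_pow₀ (by linarith) (by norm_num)
  have : 0 < (((R₀ + 2) / 2) ^ 3 - 1) / (3 / 2 * p) := div_pos (by linarith) (by positivity)
  unfold centreTime; linarith

lemma hasDerivAt_radialU (hq : 0 < ingoingClock p s) :
    HasDerivAt (radialU p R₀) (radialPu p s) s := by
  have : HasDerivAt (radialU p R₀)
      (2 * (3 / 2 * p * (1 / 3) * ingoingClock p s ^ ((1 : ℝ) / 3 - 1))) s :=
    (((hasDerivAt_ingoingClock p s).rpow_const (Or.inl hq.ne')).const_mul 2).sub_const 1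
      |>.sub_const (R₀ / 2)
  convert this using 1
  rw [radialPu, show (1 : ℝ) / 3 - 1 = -(2 : ℝ) / 3 by norm_num]
  ring

lemma hasDerivAt_radialPu (hq : 0 < ingoingClock p s) :
    HasDerivAt (radialPu p) (-radialPu p s ^ 2 / ingoingClock p s ^ ((1 : ℝ) / 3)) s := by
  have : HasDerivAt (radialPu p)
      (p * (3 / 2 * p * (-(2 : ℝ) / 3) * ingoingClock p s ^ (-(2 : ℝ) / 3 - 1))) s :=
    ((hasDerivAt_ingoingClock p s).rpow_const (Or.inl hq.ne')).const_mul p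
  convert this using 1
  -- both sides are `-p² q^{-5/3}`
  have hsq : (ingoingClock p s ^ (-(2 : ℝ) / 3)) ^ 2 = ingoingClock p s ^ (-(4 : ℝ) / 3) := by
    rw [← Real.rpow_natCast, ← Real.rpow_mul hq.le]; norm_num
  rw [radialPu, mul_pow, hsq, show -(2 : ℝ) / 3 - 1 = -(4 : ℝ) / 3 - 1 / 3 by norm_num,
    Real.rpow_sub hq]
  ring

lemma tOf_radial_eq_sq :
    tOf (radialU p R₀) (radialV R₀) s = (ingoingClock p s ^ ((1 : ℝ) / 3)) ^ 2 := by
  rw [tOf, radialU, radialV]; ring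

lemma sqrt_tOf_radial (hq : 0 ≤ ingoingClock p s) :
    √(tOf (radialU p R₀) (radialV R₀) s) = ingoingClock p s ^ ((1 : ℝ) / 3) := by
  rw [tOf_radial_eq_sq, Real.sqrt_sq (by positivity)]

lemma tOf_radial (hq : 0 ≤ ingoingClock p s) :
    tOf (radialU p R₀) (radialV R₀) s = ingoingClock p s ^ ((2 : ℝ) / 3) := by
  rw [tOf_radial_eq_sq, ← Real.rpow_natCast, ← Real.rpow_mul hq]
  norm_num

lemma rOf_radial :
    rOf (radialU p R₀) (radialV R₀) s = R₀ + 2 - 2 * ingoingClock p s ^ ((1 : ℝ) / 3) := by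
  rw [rOf, radialU, radialV]; ring

lemma rOf_radial_centreTime (hp : p ≠ 0) (hR₀ : 0 ≤ R₀) :
    rOf (radialU p R₀) (radialV R₀) (centreTime p R₀) = 0 := by
  rw [rOf_radial, ingoingClock_centreTime hp, Real.pow_three_rpow_one_div_three (by linarith)]
  ring

lemma tendsto_rOf_radial_centreTime (hp : 0 < p) (hR₀ : 0 ≤ R₀) :
    Tendsto (rOf (radialU p R₀) (radialV R₀)) (𝓝 (centreTime p R₀)) (𝓝 0) := by
  have hq : 0 < ingoingClock p (centreTime p R₀) := by
    rw [ingoingClock_centreTime hp.ne']; positivity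
  rw [← rOf_radial_centreTime hp.ne' hR₀]
  exact (continuousAt_const.sub (hasDerivAt_radialU hq).continuousAt).tendsto

lemma rOf_radial_pos (hp : 0 < p) (hR₀ : 0 ≤ R₀) (h1 : 1 ≤ s) (hs : s < centreTime p R₀) :
    0 < rOf (radialU p R₀) (radialV R₀) s := by
  have hq : ingoingClock p s < ((R₀ + 2) / 2) ^ 3 := by
    rw [← ingoingClock_centreTime hp.ne']; unfold ingoingClock; nlinarith
  have := Real.rpow_lt_rpow (by linarith [one_le_ingoingClock hp.le h1]) hq
    (by norm_num : (0 : ℝ) < 1 / 3)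
  rw [Real.pow_three_rpow_one_div_three (by linarith)] at this
  rw [rOf_radial]; linarith

lemma integral_radialPu (hp : 0 ≤ p) (hs : 1 ≤ s) :
    ∫ x in (1 : ℝ)..s, radialPu p x = 2 * ingoingClock p s ^ ((1 : ℝ) / 3) - 2 := by
  have hq : ∀ x ∈ Set.uIcc 1 s, 0 < ingoingClock p x := fun x hx => by
    rw [Set.uIcc_of_le hs] at hx; linarith [one_le_ingoingClock hp hx.1]
  have hderiv : ∀ x ∈ Set.uIcc 1 s, HasDerivAt (radialU p 0) (radialPu p x) x :=
    fun x hx => hasDerivAt_radialU (hq x hx)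
  have hcont : ContinuousOn (radialPu p) (Set.uIcc 1 s) :=
    continuousOn_const.mul (ContinuousOn.rpow_const
      (fun x _ => (hasDerivAt_ingoingClock p x).continuousAt.continuousWithinAt)
      fun x hx => Or.inl (hq x hx).ne')
  rw [intervalIntegral.integral_eq_sub_of_hasDerivAt hderiv hcont.intervalIntegrable]
  simp [radialU, ingoingClock]

lemma flrwGeodesicSystem_radial (hp : 0 < p) (hR₀ : 0 < R₀) :
    FLRWGeodesicSystem (IcoE 1 (centreTime p R₀)) 0
      (radialU p R₀) (radialV R₀) (radialPu p) 0 := by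
  have hq : ∀ s ∈ IcoE 1 (centreTime p R₀), 1 ≤ ingoingClock p s :=
    fun s hs => one_le_ingoingClock hp.le hs.1
  refine ⟨fun s hs => ?_,
    fun s hs => rOf_radial_pos hp hR₀.le hs.1 (EReal.coe_lt_coe_iff.1 hs.2), fun s hs => ?_,
    fun _ _ => le_rfl, fun s hs => hasDerivAt_radialU (by linarith [hq s hs]),
    fun s _ => hasDerivAt_const s _, fun s hs => ?_, fun s _ => ?_⟩
  · have : 0 < ingoingClock p s ^ ((1 : ℝ) / 3) := Real.rpow_pos_of_pos (by linarith [hq s hs]) _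
    simp only [radialU, radialV]; linarith
  · unfold radialPu; have := hq s hs; positivity
  · rw [sqrt_tOf_radial (by linarith [hq s hs])]
    simpa using hasDerivAt_radialPu (by linarith [hq s hs])
  · simp

end ExplicitSolution

namespace FLRWGeodesicSystem

variable {I : Set ℝ} {u v pu pv : ℝ → ℝ} {s : ℝ}

lemma sum_pos {L : ℝ} (h : FLRWGeodesicSystem I L u v pu pv) (hs : s ∈ I) : 0 < v s + u s :=
  h.1 s hs

lemma rOf_pos {L : ℝ} (h : FLRWGeodesicSystem I L u v pu pv) (hs : s ∈ I) : 0 < rOf u v s :=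
  h.2.1 s hs

lemma pv_nonneg {L : ℝ} (h : FLRWGeodesicSystem I L u v pu pv) (hs : s ∈ I) : 0 ≤ pv s :=
  h.2.2.2.1 s hs

lemma sqrt_tOf {L : ℝ} (h : FLRWGeodesicSystem I L u v pu pv) (hs : s ∈ I) :
    √(tOf u v s) = (v s + u s) / 2 := by
  rw [show tOf u v s = ((v s + u s) / 2) ^ 2 by unfold tOf; ring]
  exact Real.sqrt_sq (by linarith [h.sum_pos hs])

lemma hasDerivAt_u {L : ℝ} (h : FLRWGeodesicSystem I L u v pu pv) (hs : s ∈ I) :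
    HasDerivAt u (pu s) s :=
  h.2.2.2.2.1 s hs

lemma hasDerivAt_pu (h : FLRWGeodesicSystem I 0 u v pu pv) (hs : s ∈ I) :
    HasDerivAt pu (-pu s ^ 2 / ((v s + u s) / 2)) s := by
  simpa [h.sqrt_tOf hs] using h.2.2.2.2.2.2.1 s hs

lemma hasDerivAt_pv (h : FLRWGeodesicSystem I 0 u v pu pv) (hs : s ∈ I) :
    HasDerivAt pv (-pv s ^ 2 / ((v s + u s) / 2)) s := by
  simpa [h.sqrt_tOf hs] using h.2.2.2.2.2.2.2 s hs

lemma antitoneOn_pv (hI : Convex ℝ I) (h : FLRWGeodesicSystem I 0 u v pu pv) :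
    AntitoneOn pv I :=
  antitoneOn_of_hasDerivWithinAt_nonpos hI
    (fun x hx => (h.hasDerivAt_pv hx).continuousAt.continuousWithinAt)
    (fun x hx => (h.hasDerivAt_pv (interior_subset hx)).hasDerivWithinAt)
    (fun x hx => div_nonpos_of_nonpos_of_nonneg (by nlinarith)
      (by linarith [h.sum_pos (interior_subset hx)]))

lemma eqOn_zero_pv {a : ℝ} {S : EReal}
    (h : FLRWGeodesicSystem (IcoE a S) 0 u v pu pv) (ha : a ∈ IcoE a S) (hpva : pv a = 0) :
    (IcoE a S).EqOn pv 0 := fun s hs =>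
  le_antisymm (by simpa [hpva] using h.antitoneOn_pv (ordConnected_IcoE a S).convex ha hs hs.1)
    (h.pv_nonneg hs)

section Radial

variable (h : FLRWGeodesicSystem I 0 u v pu pv) (hpv : ∀ s ∈ I, pv s = 0)
include h hpv

lemma hasDerivAt_v (hs : s ∈ I) : HasDerivAt v 0 s := by
  simpa [hpv s hs] using h.2.2.2.2.2.1 s hs

-- `(t pu)' = √t (pu + pv) pu + t pu' = √t pv pu`
lemma hasDerivAt_tOf_mul_pu (hs : s ∈ I) : HasDerivAt (fun s => tOf u v s * pu s) 0 s := by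
  have ht : HasDerivAt (tOf u v) (2 * (v s + u s) ^ 1 * (0 + pu s) / 4) s :=
    (((h.hasDerivAt_v hpv hs).add (h.hasDerivAt_u hs)).pow 2).div_const 4
  refine (ht.mul (h.hasDerivAt_pu hs)).congr_deriv ?_
  field_simp [(h.sum_pos hs).ne']
  unfold tOf
  ring

lemma hasDerivAt_half_sum_cube (hs : s ∈ I) :
    HasDerivAt (fun s => ((v s + u s) / 2) ^ 3) (3 / 2 * (tOf u v s * pu s)) s := by
  refine ((((h.hasDerivAt_v hpv hs).add (h.hasDerivAt_u hs)).div_const 2).pow 3).congr_deriv ?_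
  simp only [tOf, Pi.add_apply]
  ring

variable {p : ℝ} (hI : Convex ℝ I) (h1 : (1 : ℝ) ∈ I) (ht1 : tOf u v 1 = 1)
include hI h1 ht1

lemma tOf_mul_pu_eq (hpu1 : pu 1 = p) (hs : s ∈ I) : tOf u v s * pu s = p := by
  rw [hI.eq_of_hasDerivAt_zero (fun x hx => h.hasDerivAt_tOf_mul_pu hpv hx) hs h1, ht1, hpu1,
    one_mul]

lemma half_sum_cube_eq_ingoingClock (hpu1 : pu 1 = p) (hs : s ∈ I) :
    ((v s + u s) / 2) ^ 3 = ingoingClock p s := by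
  have hconst : ∀ x ∈ I,
      HasDerivAt (fun x => ((v x + u x) / 2) ^ 3 - ingoingClock p x) 0 x := fun x hx =>
    ((h.hasDerivAt_half_sum_cube hpv hx).sub (hasDerivAt_ingoingClock p x)).congr_deriv
      (by rw [h.tOf_mul_pu_eq hpv hI h1 ht1 hpu1 hx]; ring)
  have h1' : (v 1 + u 1) / 2 = 1 := by rw [← h.sqrt_tOf h1, ht1, Real.sqrt_one]
  have := hI.eq_of_hasDerivAt_zero hconst hs h1
  simp only [h1', ingoingClock, sub_self, mul_zero, add_zero] at this ⊢
  linarith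

lemma eqOn_radial {R₀ : ℝ} (hpu1 : pu 1 = p) (hr1 : rOf u v 1 = R₀) :
    I.EqOn u (radialU p R₀) ∧ I.EqOn v (radialV R₀) ∧ I.EqOn pu (radialPu p) := by
  have hcube := fun s (hs : s ∈ I) => h.half_sum_cube_eq_ingoingClock hpv hI h1 ht1 hpu1 hs
  have hq : ∀ s ∈ I, 0 < ingoingClock p s := fun s hs => by
    rw [← hcube s hs]; have := h.sum_pos hs; positivity
  have hsum : ∀ s ∈ I, (v s + u s) / 2 = ingoingClock p s ^ ((1 : ℝ) / 3) := fun s hs => by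
    rw [← hcube s hs, Real.pow_three_rpow_one_div_three (by linarith [h.sum_pos hs])]
  have hv : I.EqOn v (radialV R₀) := fun s hs => by
    have h1' : (v 1 + u 1) / 2 = 1 := by rw [← h.sqrt_tOf h1, ht1, Real.sqrt_one]
    rw [hI.eq_of_hasDerivAt_zero (fun x hx => h.hasDerivAt_v hpv hx) hs h1, radialV]
    unfold rOf at hr1; linarith
  have hu : I.EqOn u (radialU p R₀) := fun s hs => by
    have := hv hs
    rw [radialV] at this
    rw [radialU]; linarith [hsum s hs]
  refine ⟨hu, hv, fun s hs => ?_⟩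
  have ht : tOf u v s = ingoingClock p s ^ ((2 : ℝ) / 3) := by
    rw [← tOf_radial (hq s hs).le (R₀ := R₀), tOf, tOf, hu hs, hv hs]
  have ht0 : tOf u v s ≠ 0 := by rw [ht]; exact (Real.rpow_pos_of_pos (hq s hs) _).ne'
  rw [radialPu, show -(2 : ℝ) / 3 = -(2 / 3) by ring, Real.rpow_neg (hq s hs).le, ← ht,
    ← h.tOf_mul_pu_eq hpv hI h1 ht1 hpu1 hs]
  field_simp

end Radial

end FLRWGeodesicSystem

/-- **Ingoing radial null geodesics in FLRW reach the centre in finite parameter time.**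
Let `(u,v,pu,pv)` solve the FLRW null geodesic system with `L = 0` on `[1,S)`, maximal
subject to the constraints `r > 0` and `v+u > 0`, with `t(1) = 1`, `pv(1) = 0`,
`p := pu(1) > 0` and `R₀ := r(1) > 0`.  Then `pv ≡ 0` on `[1,S)`,
`t(s) = (1 + (3/2)p(s−1))^{2/3}` and
`r(s) = R₀ − ∫₁ˢ p·(1 + (3/2)p(s'−1))^{−2/3} ds'` on `[1,S)`; moreover `S < ∞` and
`r(s) → 0` as `s → S`. -/
theorem flrw_ingoing_radial_geodesic (S : EReal) (hS : ((1 : ℝ) : EReal) < S)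
    (u v pu pv : ℝ → ℝ) (p R₀ : ℝ)
    (hsys : FLRWGeodesicSystem (IcoE 1 S) 0 u v pu pv)
    (hmax : ∀ S' : EReal, S < S' → ∀ u' v' pu' pv' : ℝ → ℝ,
      Set.EqOn u' u (IcoE 1 S) → Set.EqOn v' v (IcoE 1 S) →
      Set.EqOn pu' pu (IcoE 1 S) → Set.EqOn pv' pv (IcoE 1 S) →
      ¬ FLRWGeodesicSystem (IcoE 1 S') 0 u' v' pu' pv')
    (ht1 : tOf u v 1 = 1) (hpv1 : pv 1 = 0)
    (hpu1 : pu 1 = p) (hp : 0 < p)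
    (hr1 : rOf u v 1 = R₀) (hR₀ : 0 < R₀) :
    (∀ s ∈ IcoE 1 S, pv s = 0) ∧
    (∀ s ∈ IcoE 1 S, tOf u v s = (1 + 3 / 2 * p * (s - 1)) ^ ((2 : ℝ) / 3)) ∧
    (∀ s ∈ IcoE 1 S,
      rOf u v s = R₀ - ∫ x in (1 : ℝ)..s, p * (1 + 3 / 2 * p * (x - 1)) ^ (-(2 : ℝ) / 3)) ∧
    S < ⊤ ∧
    Tendsto (rOf u v) (𝓝[<] S.toReal) (𝓝 0) := by
  have h1 : (1 : ℝ) ∈ IcoE 1 S := ⟨le_rfl, hS⟩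
  have hpv := hsys.eqOn_zero_pv h1 hpv1
  obtain ⟨hu, hv, hpu⟩ := hsys.eqOn_radial hpv (ordConnected_IcoE 1 S).convex h1 ht1 hpu1 hr1
  have htr : ∀ s ∈ IcoE 1 S, tOf u v s = tOf (radialU p R₀) (radialV R₀) s ∧
      rOf u v s = rOf (radialU p R₀) (radialV R₀) s := fun s hs => by
    simp only [tOf, rOf, hu hs, hv hs, and_self]
  have hS_le : S ≤ centreTime p R₀ := not_lt.1 fun hlt => by
    have hc : centreTime p R₀ ∈ IcoE 1 S := ⟨(one_lt_centreTime hp hR₀).le, hlt⟩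
    have := hsys.rOf_pos hc
    rw [(htr _ hc).2, rOf_radial_centreTime hp.ne' hR₀.le] at this
    exact this.false
  have hS_eq : S = centreTime p R₀ := le_antisymm hS_le <| not_lt.1 fun hlt =>
    hmax _ hlt _ _ _ _ hu.symm hv.symm hpu.symm hpv.symm (flrwGeodesicSystem_radial hp hR₀)
  refine ⟨hpv, fun s hs => ?_, fun s hs => ?_, hS_eq ▸ EReal.coe_lt_top _, ?_⟩
  · rw [(htr s hs).1, tOf_radial (by linarith [one_le_ingoingClock hp.le hs.1])]; rfl
  · rw [(htr s hs).2, rOf_radial]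
    have := integral_radialPu hp.le hs.1
    simp only [radialPu, ingoingClock] at this ⊢
    linarith
  · rw [hS_eq, EReal.toReal_coe]
    refine ((tendsto_rOf_radial_centreTime hp hR₀.le).mono_left nhdsWithin_le_nhds).congr' ?_
    filter_upwards [Ioo_mem_nhdsLT (one_lt_centreTime hp hR₀)] with s hs
    exact ((htr s ⟨hs.1.le, hS_eq ▸ EReal.coe_lt_coe_iff.2 hs.2⟩).2).symm
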